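/- For the classical case q=1: the r-Bell polynomials B_n^{(r)}(x) = ∑_{k=0}^n S_r(n,k) x^k, where S_r(n,k) = S_r(n-1,k-1) + (k+r) S_r(n-1,k), S_r(0,k)=[k=0], S_r(n,0)=r^n, have Hankel determinant det(B_{i+j}^{(r)}(x))_{i,j=0}^{n-1} = x^{n(n-1)/2} ∏_{k=0}^{n-1} k!. -/
import Mathlib

noncomputable section

/-- r-Stirling numbers of the second kind. -/
def rStirling (r : ℕ) : ℕ → ℕ → ℝ
  | 0, 0 => 1
  | 0, _ + 1 => 0
  | n + 1, 0 => (r : ℝ) * rStirling r n 0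
  | n + 1, k + 1 => rStirling r n k + ((k + 1 + r : ℕ) : ℝ) * rStirling r n (k + 1)

/-- r-Bell polynomial B_n^{(r)}(x). -/
def rBell (r : ℕ) (n : ℕ) (x : ℝ) : ℝ :=
  ∑ k ∈ Finset.range (n + 1), rStirling r n k * x ^ k

open Finset Matrix

lemma rStirling_eq_zero (r : ℕ) : ∀ n k : ℕ, n < k → rStirling r n k = 0 := by
  intro n
  induction n with
  | zero => intro k hk; match k, hk with | k + 1, _ => rfl
  | succ n ih =>
    intro k hk
    match k, hk with
    | k + 1, hk =>
      show rStirling r n k + ((k + 1 + r : ℕ) : ℝ) * rStirling r n (k + 1) = 0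
      rw [ih k (by omega), ih (k + 1) (by omega)]; ring

lemma rStirling_diag (r : ℕ) : ∀ n : ℕ, rStirling r n n = 1 := by
  intro n
  induction n with
  | zero => rfl
  | succ n ih =>
    show rStirling r n n + ((n + 1 + r : ℕ) : ℝ) * rStirling r n (n + 1) = 1
    rw [ih, rStirling_eq_zero r n (n + 1) (by omega)]; ring

/-- Transition matrix entries. -/
def Acoef (r : ℕ) (x : ℝ) (n k : ℕ) : ℝ :=
  ∑ j ∈ Finset.range (n + 1), rStirling r n j * (j.choose k : ℝ) * x ^ (j - k)

lemma Acoef_eq_zero (r : ℕ) (x : ℝ) {n k : ℕ} (h : n < k) : Acoef r x n k = 0 := by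
  apply Finset.sum_eq_zero
  intro j hj
  rw [Finset.mem_range] at hj
  rw [Nat.choose_eq_zero_of_lt (by omega)]
  push_cast; ring

lemma Acoef_diag (r : ℕ) (x : ℝ) (n : ℕ) : Acoef r x n n = 1 := by
  unfold Acoef
  rw [Finset.sum_range_succ, Finset.sum_eq_zero, rStirling_diag]
  · simp
  · intro j hj
    rw [Finset.mem_range] at hj
    rw [Nat.choose_eq_zero_of_lt (by omega)]
    push_cast; ring

lemma Acoef_zero_right (r : ℕ) (x : ℝ) (n : ℕ) : Acoef r x n 0 = rBell r n x := by
  unfold Acoef rBell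
  apply Finset.sum_congr rfl
  intro j _
  simp

lemma Acoef_zero_left (r : ℕ) (x : ℝ) (k : ℕ) :
    Acoef r x 0 k = if k = 0 then 1 else 0 := by
  unfold Acoef
  rcases k with _ | k
  · simp [rStirling]
  · simp [rStirling]

/-- The pointwise combinatorial identity. -/
lemma key (r : ℕ) (x : ℝ) (j k : ℕ) :
    ((j + 1).choose k : ℝ) * x ^ (j + 1 - k) + ((j : ℝ) + r) * (j.choose k : ℝ) * x ^ (j - k)
      = (if k = 0 then 0 else (j.choose (k - 1) : ℝ) * x ^ (j - (k - 1)))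
        + ((k : ℝ) + x + r) * (j.choose k : ℝ) * x ^ (j - k)
        + x * ((k : ℝ) + 1) * (j.choose (k + 1) : ℝ) * x ^ (j - (k + 1)) := by
  rcases k with _ | m
  · -- k = 0
    simp only [if_pos rfl, Nat.choose_zero_right, Nat.cast_one, Nat.cast_zero,
      Nat.sub_zero, zero_add]
    rcases j with _ | i
    · norm_num
    · rw [Nat.choose_one_right]
      have : i + 1 - (0 + 1) = i := by omega
      rw [this]
      push_cast
      ring
  · rcases lt_trichotomy j m with hj | hj | hj
    · -- j < m : everything vanishes
      rw [Nat.choose_eq_zero_of_lt (by omega), Nat.choose_eq_zero_of_lt (by omega),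
        Nat.choose_eq_zero_of_lt (by omega), Nat.choose_eq_zero_of_lt (by omega)]
      simp
    · -- j = m
      subst hj
      have c1 : (j + 1).choose (j + 1) = 1 := Nat.choose_self _
      have c2 : j.choose (j + 1) = 0 := Nat.choose_eq_zero_of_lt (by omega)
      have c3 : j.choose (j + 1 - 1) = 1 := by
        have : j + 1 - 1 = j := by omega
        rw [this, Nat.choose_self]
      have c4 : j.choose (j + 1 + 1) = 0 := Nat.choose_eq_zero_of_lt (by omega)
      rw [c1, c2, c3, c4, if_neg (by omega)]
      have e1 : j + 1 - (j + 1) = 0 := by omega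
      have e2 : j - (j + 1 - 1) = 0 := by omega
      rw [e1, e2]
      simp
    · -- j ≥ m + 1
      obtain ⟨d, rfl⟩ : ∃ d, j = m + 1 + d := ⟨j - (m+1), by omega⟩
      rcases d with _ | e
      · -- j = m + 1
        have e1 : m + 1 + 0 + 1 - (m + 1) = 1 := by omega
        have e2 : m + 1 + 0 - (m + 1) = 0 := by omega
        have e3 : m + 1 + 0 - (m + 1 - 1) = 1 := by omega
        have e4 : m + 1 + 0 - (m + 1 + 1) = 0 := by omega
        rw [e1, e2, e3, e4, if_neg (by omega)]
        have c1 : (m + 1 + 0 + 1).choose (m + 1) = m + 2 := by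
          simpa using Nat.succ_sub_one ▸ (Nat.choose_succ_self_right (m+1))
        have c2 : (m + 1 + 0).choose (m + 1) = 1 := by simp
        have c3 : (m + 1 + 0).choose (m + 1 - 1) = m + 1 := by
          simpa using Nat.choose_succ_self_right m
        have c4 : (m + 1 + 0).choose (m + 1 + 1) = 0 := Nat.choose_eq_zero_of_lt (by omega)
        rw [c1, c2, c3, c4]
        push_cast
        ring
      · -- j = m + 2 + e
        simp only [show m + 1 + (e + 1) = m + 1 + e + 1 by omega]
        have e1 : m + 1 + e + 1 + 1 - (m + 1) = e + 2 := by omega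
        have e2 : m + 1 + e + 1 - (m + 1) = e + 1 := by omega
        have e3 : m + 1 + e + 1 - (m + 1 - 1) = e + 2 := by omega
        have e4 : m + 1 + e + 1 - (m + 1 + 1) = e := by omega
        rw [e1, e2, e3, e4, if_neg (by omega)]
        have pascal : (((m + 1 + e + 1) + 1).choose (m + 1) : ℝ)
            = ((m + 1 + e + 1).choose m : ℝ) + ((m + 1 + e + 1).choose (m + 1) : ℝ) := by
          rw [← Nat.cast_add, ← Nat.choose_succ_succ]
        have habs : ((m + 1 + e + 1).choose (m + 1 + 1) : ℝ) * ((m : ℝ) + 2)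
            = ((m + 1 + e + 1).choose (m + 1) : ℝ) * ((e : ℝ) + 1) := by
          have h := Nat.choose_succ_right_eq (m + 1 + e + 1) (m + 1)
          have h2 : m + 1 + e + 1 - (m + 1) = e + 1 := by omega
          rw [h2] at h
          exact_mod_cast congrArg (Nat.cast : ℕ → ℝ) h
        have hmm : (m + 1 + e + 1).choose (m + 1 - 1) = (m + 1 + e + 1).choose m := by
          norm_num
        rw [hmm, pascal]
        push_cast at habs pascal ⊢
        linear_combination (-(x * x ^ e)) * habs


lemma Acoef_succ (r : ℕ) (x : ℝ) (n k : ℕ) :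
    Acoef r x (n + 1) k
      = (if k = 0 then 0 else Acoef r x n (k - 1)) + ((k : ℝ) + x + r) * Acoef r x n k
        + x * ((k : ℝ) + 1) * Acoef r x n (k + 1) := by
  set g : ℕ → ℝ := fun j => ((j : ℝ) + r) * rStirling r n j * (j.choose k : ℝ) * x ^ (j - k)
    with hgdef
  have hg : (∑ j ∈ range (n + 1), g (j + 1)) + g 0 = ∑ j ∈ range (n + 1), g j := by
    rw [← Finset.sum_range_succ' g (n + 1), Finset.sum_range_succ]
    have : g (n + 1) = 0 := by
      simp only [hgdef, rStirling_eq_zero r n (n + 1) (by omega)]; ring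
    rw [this, add_zero]
  have hL : Acoef r x (n + 1) k
      = ∑ j ∈ range (n + 1),
          rStirling r n j * (((j + 1).choose k : ℝ) * x ^ (j + 1 - k)
            + ((j : ℝ) + r) * (j.choose k : ℝ) * x ^ (j - k)) := by
    unfold Acoef
    rw [Finset.sum_range_succ'
      (fun j => rStirling r (n + 1) j * (j.choose k : ℝ) * x ^ (j - k)) (n + 1)]
    have hterm : ∀ j, rStirling r (n + 1) (j + 1) * ((j + 1).choose k : ℝ) * x ^ (j + 1 - k)
        = rStirling r n j * ((j + 1).choose k : ℝ) * x ^ (j + 1 - k) + g (j + 1) := by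
      intro j
      show (rStirling r n j + ((j + 1 + r : ℕ) : ℝ) * rStirling r n (j + 1))
            * ((j + 1).choose k : ℝ) * x ^ (j + 1 - k) = _
      simp only [hgdef]
      push_cast
      ring
    have hzero : rStirling r (n + 1) 0 * ((Nat.choose 0 k : ℕ) : ℝ) * x ^ (0 - k) = g 0 := by
      show ((r : ℝ) * rStirling r n 0) * ((Nat.choose 0 k : ℕ) : ℝ) * x ^ (0 - k) = _
      simp only [hgdef]
      push_cast
      ring
    simp only [hterm]
    rw [Finset.sum_add_distrib, add_assoc, hzero, hg, ← Finset.sum_add_distrib]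
    apply Finset.sum_congr rfl
    intro j _
    simp only [hgdef]
    ring
  have hR : (if k = 0 then 0 else Acoef r x n (k - 1)) + ((k : ℝ) + x + r) * Acoef r x n k
        + x * ((k : ℝ) + 1) * Acoef r x n (k + 1)
      = ∑ j ∈ range (n + 1),
          rStirling r n j *
            ((if k = 0 then 0 else (j.choose (k - 1) : ℝ) * x ^ (j - (k - 1)))
              + ((k : ℝ) + x + r) * (j.choose k : ℝ) * x ^ (j - k)
              + x * ((k : ℝ) + 1) * (j.choose (k + 1) : ℝ) * x ^ (j - (k + 1))) := by
    have h1 : (if k = 0 then 0 else Acoef r x n (k - 1))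
        = ∑ j ∈ range (n + 1),
            rStirling r n j * (if k = 0 then 0 else (j.choose (k - 1) : ℝ) * x ^ (j - (k - 1))) := by
      by_cases hk : k = 0
      · simp [hk]
      · simp only [if_neg hk]
        unfold Acoef
        exact Finset.sum_congr rfl fun j _ => by ring
    have h2 : ((k : ℝ) + x + r) * Acoef r x n k
        = ∑ j ∈ range (n + 1),
            rStirling r n j * (((k : ℝ) + x + r) * (j.choose k : ℝ) * x ^ (j - k)) := by
      unfold Acoef
      rw [Finset.mul_sum]
      exact Finset.sum_congr rfl fun j _ => by ring
    have h3 : x * ((k : ℝ) + 1) * Acoef r x n (k + 1)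
        = ∑ j ∈ range (n + 1),
            rStirling r n j * (x * ((k : ℝ) + 1) * (j.choose (k + 1) : ℝ) * x ^ (j - (k + 1))) := by
      unfold Acoef
      rw [Finset.mul_sum]
      exact Finset.sum_congr rfl fun j _ => by ring
    rw [h1, h2, h3, ← Finset.sum_add_distrib, ← Finset.sum_add_distrib]
    exact Finset.sum_congr rfl fun j _ => by ring
  rw [hL, hR]
  apply Finset.sum_congr rfl
  intro j _
  rw [mul_comm (rStirling r n j), mul_comm (rStirling r n j), ← key r x j k]

/-- The weights (norms of orthogonal polynomials). -/
def wgt (x : ℝ) (k : ℕ) : ℝ := x ^ k * (k.factorial : ℝ)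

lemma wgt_succ (x : ℝ) (k : ℕ) : wgt x (k + 1) = x * ((k : ℝ) + 1) * wgt x k := by
  unfold wgt
  rw [pow_succ, Nat.factorial_succ]
  push_cast
  ring

lemma expand_lemma (r : ℕ) (x : ℝ) (i j M : ℕ) (hi : i < M + 1) :
    ∑ k ∈ range (M + 1), Acoef r x (i + 1) k * Acoef r x j k * wgt x k
      = (∑ k ∈ range (M + 1), ((k : ℝ) + x + r) * (Acoef r x i k * Acoef r x j k) * wgt x k)
        + ∑ k ∈ range M, x * ((k : ℝ) + 1)
            * (Acoef r x i k * Acoef r x j (k + 1) + Acoef r x i (k + 1) * Acoef r x j k)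
            * wgt x k := by
  have hstep : ∀ k, Acoef r x (i + 1) k * Acoef r x j k * wgt x k
      = (if k = 0 then 0 else Acoef r x i (k - 1)) * Acoef r x j k * wgt x k
        + ((k : ℝ) + x + r) * (Acoef r x i k * Acoef r x j k) * wgt x k
        + x * ((k : ℝ) + 1) * Acoef r x i (k + 1) * Acoef r x j k * wgt x k := by
    intro k
    rw [Acoef_succ]
    ring
  simp only [hstep]
  rw [Finset.sum_add_distrib, Finset.sum_add_distrib]
  have hT1 : ∑ k ∈ range (M + 1),
        (if k = 0 then 0 else Acoef r x i (k - 1)) * Acoef r x j k * wgt x k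
      = ∑ k ∈ range M, x * ((k : ℝ) + 1) * (Acoef r x i k * Acoef r x j (k + 1)) * wgt x k := by
    rw [Finset.sum_range_succ'
      (fun k => (if k = 0 then 0 else Acoef r x i (k - 1)) * Acoef r x j k * wgt x k) M]
    have h0 : (if (0 : ℕ) = 0 then (0 : ℝ) else Acoef r x i (0 - 1)) * Acoef r x j 0 * wgt x 0
        = 0 := by simp
    rw [h0, add_zero]
    apply Finset.sum_congr rfl
    intro k _
    rw [if_neg (Nat.succ_ne_zero k), Nat.add_sub_cancel, wgt_succ]
    push_cast
    ring
  have hT3 : ∑ k ∈ range (M + 1),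
        x * ((k : ℝ) + 1) * Acoef r x i (k + 1) * Acoef r x j k * wgt x k
      = ∑ k ∈ range M, x * ((k : ℝ) + 1) * Acoef r x i (k + 1) * Acoef r x j k * wgt x k := by
    rw [Finset.sum_range_succ, Acoef_eq_zero r x hi]
    simp
  rw [hT1, hT3]
  have hcomb : (∑ k ∈ range M, x * ((k : ℝ) + 1) * (Acoef r x i k * Acoef r x j (k + 1)) * wgt x k)
      + ∑ k ∈ range M, x * ((k : ℝ) + 1) * Acoef r x i (k + 1) * Acoef r x j k * wgt x k
      = ∑ k ∈ range M, x * ((k : ℝ) + 1)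
          * (Acoef r x i k * Acoef r x j (k + 1) + Acoef r x i (k + 1) * Acoef r x j k)
          * wgt x k := by
    rw [← Finset.sum_add_distrib]
    exact Finset.sum_congr rfl fun k _ => by ring
  linarith [hcomb]

lemma shift_lemma (r : ℕ) (x : ℝ) (i j M : ℕ) (hi : i < M + 1) (hj : j < M + 1) :
    ∑ k ∈ range (M + 1), Acoef r x (i + 1) k * Acoef r x j k * wgt x k
      = ∑ k ∈ range (M + 1), Acoef r x i k * Acoef r x (j + 1) k * wgt x k := by
  rw [expand_lemma r x i j M hi]
  have : ∑ k ∈ range (M + 1), Acoef r x i k * Acoef r x (j + 1) k * wgt x k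
      = ∑ k ∈ range (M + 1), Acoef r x (j + 1) k * Acoef r x i k * wgt x k := by
    exact Finset.sum_congr rfl fun k _ => by ring
  rw [this, expand_lemma r x j i M hj]
  congr 1
  · exact Finset.sum_congr rfl fun k _ => by ring
  · exact Finset.sum_congr rfl fun k _ => by ring

lemma sum_Acoef (r : ℕ) (x : ℝ) :
    ∀ i j N : ℕ, i + j < N →
      ∑ k ∈ range N, Acoef r x i k * Acoef r x j k * wgt x k = rBell r (i + j) x := by
  intro i
  induction i with
  | zero =>
    intro j N hN
    rw [Finset.sum_eq_single 0]
    · rw [Acoef_zero_left, if_pos rfl, Acoef_zero_right]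
      simp [wgt]
    · intro k _ hk
      rw [Acoef_zero_left, if_neg hk]
      ring
    · intro h
      exact absurd (Finset.mem_range.mpr (by omega)) h
  | succ i ih =>
    intro j N hN
    obtain ⟨M, rfl⟩ : ∃ M, N = M + 1 := ⟨N - 1, by omega⟩
    rw [shift_lemma r x i j M (by omega) (by omega)]
    rw [ih (j + 1) (M + 1) (by omega)]
    congr 1
    omega

lemma sum_pad (r : ℕ) (x : ℝ) (i j a b : ℕ) (hi : i < a) (hab : a ≤ b) :
    ∑ k ∈ range b, Acoef r x i k * Acoef r x j k * wgt x k
      = ∑ k ∈ range a, Acoef r x i k * Acoef r x j k * wgt x k := by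
  symm
  apply Finset.sum_subset (Finset.range_subset_range.mpr hab)
  intro k _ hk
  rw [Finset.mem_range, not_lt] at hk
  rw [Acoef_eq_zero r x (by omega)]
  ring

/-- Hankel determinant of the r-Bell polynomials: det(B_{i+j}^{(r)}(x)) = x^{n(n-1)/2} ∏_{k<n} k!. -/
theorem hankel_rBell (r : ℕ) (x : ℝ) (n : ℕ) :
    Matrix.det (Matrix.of fun i j : Fin n => rBell r ((i : ℕ) + (j : ℕ)) x) =
      x ^ (n * (n - 1) / 2) * ∏ k ∈ Finset.range n, (Nat.factorial k : ℝ) := by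
  classical
  set M : Matrix (Fin n) (Fin n) ℝ := Matrix.of fun i k : Fin n => Acoef r x i k with hM
  set D : Matrix (Fin n) (Fin n) ℝ := Matrix.diagonal fun k : Fin n => wgt x k with hD
  have hH : (Matrix.of fun i j : Fin n => rBell r ((i : ℕ) + (j : ℕ)) x) = M * D * Mᵀ := by
    ext i j
    rw [Matrix.mul_apply]
    simp only [Matrix.mul_diagonal, Matrix.transpose_apply, Matrix.of_apply, hM, hD]
    have : ∀ k : Fin n, Acoef r x i k * wgt x k * Acoef r x j k
        = Acoef r x i k * Acoef r x j k * wgt x k := fun k => by ring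
    rw [Fintype.sum_congr _ _ this]
    rw [Fin.sum_univ_eq_sum_range (fun k => Acoef r x i k * Acoef r x j k * wgt x k) n]
    rw [← sum_pad r x i j n (n + ((i : ℕ) + (j : ℕ)) + 1) i.isLt (by omega)]
    rw [sum_Acoef r x i j (n + ((i : ℕ) + (j : ℕ)) + 1) (by omega)]
  rw [hH, Matrix.det_mul, Matrix.det_mul, Matrix.det_transpose]
  have hdetM : M.det = 1 := by
    rw [Matrix.det_of_lowerTriangular M ?_]
    · rw [Finset.prod_eq_one]
      intro i _
      exact Acoef_diag r x i
    · intro i j hij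
      exact Acoef_eq_zero r x hij
  have hdetD : D.det = x ^ (n * (n - 1) / 2) * ∏ k ∈ Finset.range n, (Nat.factorial k : ℝ) := by
    rw [hD, Matrix.det_diagonal]
    rw [Fin.prod_univ_eq_prod_range (fun k => wgt x k) n]
    unfold wgt
    rw [Finset.prod_mul_distrib, Finset.prod_pow_eq_pow_sum]
    congr 2
    have := Finset.sum_range_id_mul_two n
    omega
  rw [hdetM, hdetD]
  ring

end
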